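/- arXiv:1011.5862 — 4 statements merged into one kernel-verified Lean document; each statement's English description precedes it below -/
import Mathlib

section
/- Let F = F(A) be the free group on A = {a_1,…,a_k} with k ≥ 2 and let m ≥ 1. The set of m-tuples (u_1,…,u_m) ∈ C_{m,A} such that for every i ≠ j the element u_i is conjugate in F to neither u_j nor u_j^{-1} is exponentially generic in C_{m,A}. -/
/-!
Two cyclically reduced elements of a free group are conjugate only if their reduced words are
cyclic permutations of each other. So among the `c ^ m` tuples of cyclically reduced words of
length `n` (where `c ≥ k ^ n ≥ 2 ^ n`), a tuple violating the condition has some entry `u_i`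
among the at most `2 (n + 1)` cyclic permutations of `u_j` or `u_j⁻¹`; there are at most
`m ^ 2 · 2 (n + 1) · c ^ (m - 1)` of these, a proportion of at most
`2 m ^ 2 (n + 1) / 2 ^ n ≤ 4 m ^ 2 (3 / 4) ^ n`.
-/

/-- The length of the freely reduced word representing `g`. -/
def wlen {α : Type} [DecidableEq α] (g : FreeGroup α) : ℕ := g.toWord.length

/-- `g` is cyclically reduced: in its reduced word the first letter is not
the inverse of the last letter. -/
def CyclicallyReduced {α : Type} [DecidableEq α] (g : FreeGroup α) : Prop :=
  ∀ x y : α × Bool, g.toWord.head? = some x → g.toWord.getLast? = some y →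
    x ≠ (y.1, !y.2)

/-- `C_{m,A}`: the set of `m`-tuples of cyclically reduced words in the free
group of rank `k`, all entries of equal length. -/
def Cset (k m : ℕ) : Set (Fin m → FreeGroup (Fin k)) :=
  {T | (∀ i, CyclicallyReduced (T i)) ∧ ∀ i j, wlen (T i) = wlen (T j)}

/-- `γ_A(n,U)`: the number of tuples in `U` all of whose entries have length `n`. -/
noncomputable def gammaA {k m : ℕ} (U : Set (Fin m → FreeGroup (Fin k))) (n : ℕ) : ℕ :=
  Set.ncard {T | T ∈ U ∧ ∀ i, wlen (T i) = n}

/-- `U` is an exponentially generic subset of `C_{m,A}`: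
`γ(n,U)/γ(n,C_{m,A}) → 1` exponentially fast. -/
def ExpGenericIn {k m : ℕ} (U : Set (Fin m → FreeGroup (Fin k))) : Prop :=
  U ⊆ Cset k m ∧ ∃ C : ℝ, 0 < C ∧ ∃ q : ℝ, 0 < q ∧ q < 1 ∧
    ∀ n : ℕ, |((gammaA U n : ℝ) / (gammaA (Cset k m) n : ℝ)) - 1| ≤ C * q ^ n

namespace FreeGroup

open List

variable {α : Type*} {L : List (α × Bool)}

theorem isCyclicallyReduced_iff_isReduced_append_self :
    IsCyclicallyReduced L ↔ IsReduced (L ++ L) := by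
  rw [IsReduced, isChain_append, isCyclicallyReduced_iff, IsReduced]
  tauto

theorem IsCyclicallyReduced.rotate (h : IsCyclicallyReduced L) (n : ℕ) :
    IsCyclicallyReduced (L.rotate n) := by
  rcases eq_or_ne L [] with rfl | hL
  · simp
  rw [isCyclicallyReduced_iff_isReduced_append_self] at h ⊢
  have h3 : IsReduced (L ++ L ++ L) := h.append_overlap h hL
  refine h3.infix ⟨L.take (n % L.length), L.drop (n % L.length), ?_⟩
  conv_rhs => rw [← L.take_append_drop (n % L.length)]
  simp only [rotate_eq_drop_append_take_mod, append_assoc]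

theorem _root_.List.IsRotated.isCyclicallyReduced {L' : List (α × Bool)} (h : L ~r L')
    (hL : IsCyclicallyReduced L) : IsCyclicallyReduced L' := by
  obtain ⟨n, rfl⟩ := h
  exact hL.rotate n

theorem IsReduced.invRev [DecidableEq α] (h : IsReduced L) : IsReduced (invRev L) := by
  have := isReduced_toWord (x := (mk L)⁻¹)
  rwa [toWord_inv, toWord_mk, h.reduce_eq] at this

theorem IsCyclicallyReduced.invRev [DecidableEq α] (h : IsCyclicallyReduced L) :
    IsCyclicallyReduced (invRev L) := by
  rw [isCyclicallyReduced_iff_isReduced_append_self] at h ⊢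
  simpa using h.invRev

theorem isCyclicallyReduced_of_forall_snd_eq {b : Bool} (h : ∀ a ∈ L, a.2 = b) :
    IsCyclicallyReduced L := by
  rw [isCyclicallyReduced_iff_isReduced_append_self]
  refine (pairwise_of_forall_mem_list fun a ha c hc _ => ?_).isChain
  rw [h a (by simpa using ha), h c (by simpa using hc)]

theorem isReduced_append_of_getLast_head {L₁ L₂ : List (α × Bool)} (h₁ : IsReduced L₁)
    (h₂ : IsReduced L₂) (h : ∀ a ∈ L₁.getLast?, ∀ b ∈ L₂.head?, a.1 = b.1 → a.2 = b.2) :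
    IsReduced (L₁ ++ L₂) :=
  isChain_append.2 ⟨h₁, h₂, h⟩

theorem mk_append_cons_cons_inv {L₁ L₂ : List (α × Bool)} (x : α × Bool) :
    mk (L₁ ++ x :: (x.1, !x.2) :: L₂) = mk (L₁ ++ L₂) :=
  Quot.sound Red.Step.not

theorem mk_append_singleton_conj_cons_inv (z r : List (α × Bool)) (x : α × Bool) :
    mk (z ++ [x] ++ ((x.1, !x.2) :: r) ++ invRev (z ++ [x])) =
      mk (z ++ (r ++ [(x.1, !x.2)]) ++ invRev z) := by
  have : z ++ [x] ++ ((x.1, !x.2) :: r) ++ invRev (z ++ [x]) =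
      z ++ x :: (x.1, !x.2) :: (r ++ [(x.1, !x.2)] ++ invRev z) := by simp [invRev]
  rw [this, mk_append_cons_cons_inv]
  simp

theorem mk_append_singleton_conj_concat (z r : List (α × Bool)) (x : α × Bool) :
    mk (z ++ [x] ++ (r ++ [x]) ++ invRev (z ++ [x])) = mk (z ++ (x :: r) ++ invRev z) := by
  have : z ++ [x] ++ (r ++ [x]) ++ invRev (z ++ [x]) =
      (z ++ x :: r) ++ x :: (x.1, !x.2) :: invRev z := by simp [invRev]
  rw [this, mk_append_cons_cons_inv]

theorem not_isCyclicallyReduced_append_invRev {Z : List (α × Bool)} (hZ : Z ≠ [])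
    (M : List (α × Bool)) : ¬ IsCyclicallyReduced (Z ++ M ++ invRev Z) := by
  obtain ⟨y, Z, rfl⟩ := exists_cons_of_ne_nil hZ
  intro h
  have := h.2 (y.1, !y.2) (by rw [invRev_cons, ← append_assoc]; exact getLast?_concat ..) y rfl
  simp at this

variable [DecidableEq α]

theorem isReduced_conj_append_singleton {z r : List (α × Bool)} {x : α × Bool}
    (hz : IsReduced (z ++ [x])) (hr : IsReduced r) (hr₀ : r ≠ [])
    (hhead : ∀ b ∈ r.head?, x.1 = b.1 → x.2 = b.2)
    (hlast : ∀ a ∈ r.getLast?, a.1 = x.1 → a.2 = !x.2) :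
    IsReduced (z ++ [x] ++ r ++ invRev (z ++ [x])) := by
  refine IsReduced.append_overlap ?_ ?_ hr₀
  · exact isReduced_append_of_getLast_head hz hr (by simpa using hhead)
  · refine isReduced_append_of_getLast_head hr hz.invRev fun a ha b hb => ?_
    obtain rfl : b = (x.1, !x.2) := by simpa [invRev] using hb.symm
    exact hlast a ha

/-- Peel off the last letter `x` of `z`: if it cancels against the first or the last letter of
`r`, the conjugate is the conjugate of a rotation of `r` by a shorter word; otherwise nothing
cancels, and the reduced word starts with `z` and ends with `z⁻¹`. -/
theorem isRotated_toWord_mk_conj {r z : List (α × Bool)} (hr : IsCyclicallyReduced r)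
    (hr₀ : r ≠ []) (hz : IsReduced z)
    (hu : IsCyclicallyReduced (mk (z ++ r ++ invRev z)).toWord) :
    (mk (z ++ r ++ invRev z)).toWord ~r r := by
  induction z using List.reverseRecOn generalizing r with
  | nil => simpa [hr.isReduced.reduce_eq] using IsRotated.refl r
  | append_singleton z x ih =>
    have hz' : IsReduced z := hz.infix (prefix_append z [x]).isInfix
    by_cases hhead : ∀ b ∈ r.head?, x.1 = b.1 → x.2 = b.2
    · by_cases hlast : ∀ a ∈ r.getLast?, a.1 = x.1 → a.2 = !x.2
      · have hW := isReduced_conj_append_singleton hz hr.isReduced hr₀ hhead hlast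
        rw [toWord_mk, hW.reduce_eq] at hu
        exact absurd hu (not_isCyclicallyReduced_append_invRev (by simp) r)
      · push Not at hlast
        obtain ⟨a, ha, ha₁, ha₂⟩ := hlast
        obtain rfl : a = x := Prod.ext ha₁ (by simpa using ha₂)
        obtain ⟨r, rfl⟩ : ∃ r', r = r' ++ [a] := ⟨r.dropLast, (dropLast_append_getLast? a ha).symm⟩
        have hrot := isRotated_concat a r
        rw [mk_append_singleton_conj_concat] at hu ⊢
        exact (ih (hrot.isCyclicallyReduced hr) (by simp) hz' hu).trans hrot.symm
    · push Not at hhead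
      obtain ⟨b, hb, hb₁, hb₂⟩ := hhead
      obtain rfl : b = (x.1, !x.2) := Prod.ext hb₁.symm (Bool.eq_not_iff.2 hb₂.symm)
      obtain ⟨r, rfl⟩ : ∃ r', r = _ :: r' := ⟨r.tail, eq_cons_of_mem_head? hb⟩
      have hrot := isRotated_concat (x.1, !x.2) r
      rw [mk_append_singleton_conj_cons_inv] at hu ⊢
      exact (ih (hrot.symm.isCyclicallyReduced hr) (by simp) hz' hu).trans hrot

theorem isRotated_toWord_of_isConj {u v : FreeGroup α} (hu : IsCyclicallyReduced u.toWord)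
    (hv : IsCyclicallyReduced v.toWord) (h : IsConj u v) : u.toWord ~r v.toWord := by
  rcases eq_or_ne v 1 with rfl | hv₁
  · simp [isConj_one_left.1 h]
  obtain ⟨c, rfl⟩ := isConj_iff.1 h.symm
  have hmk : c * v * c⁻¹ = mk (c.toWord ++ v.toWord ++ invRev c.toWord) := by
    rw [← mul_mk, ← mul_mk, ← inv_mk, mk_toWord, mk_toWord]
  rw [hmk] at hu ⊢
  exact isRotated_toWord_mk_conj hv (toWord_eq_nil_iff.not.2 hv₁) isReduced_toWord hu

end FreeGroup

namespace Set

variable {ι β γ : Type*} [Fintype ι]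

theorem ncard_univ_pi (s : ι → Set β) : (univ.pi s).ncard = ∏ i, (s i).ncard := by
  rw [← Nat.card_coe_set_eq, Nat.card_congr (Equiv.Set.univPi s), Nat.card_pi]
  exact Finset.prod_congr rfl fun i _ => Nat.card_coe_set_eq (s i)

variable [DecidableEq ι] {s : Set β} {i j : ι}

theorem ncard_setOf_forall_mem_and_eq_le (hs : s.Finite) (hij : i ≠ j) (φ : β → β) :
    {T : ι → β | (∀ l, T l ∈ s) ∧ T i = φ (T j)}.ncard ≤ s.ncard ^ (Fintype.card ι - 1) := by
  have hmaps : ∀ T ∈ {T : ι → β | (∀ l, T l ∈ s) ∧ T i = φ (T j)},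
      (fun (l : {l // l ≠ i}) => T l) ∈ univ.pi fun _ => s :=
    fun T hT l _ => hT.1 l
  have hinj : InjOn (fun T (l : {l // l ≠ i}) => T l)
      {T : ι → β | (∀ l, T l ∈ s) ∧ T i = φ (T j)} := by
    intro T hT T' hT' h
    have hne : ∀ l, l ≠ i → T l = T' l := fun l hl => congrFun h ⟨l, hl⟩
    funext l
    by_cases hl : l = i
    · rw [hl, hT.2, hT'.2, hne j hij.symm]
    · exact hne l hl
  calc _ ≤ (univ.pi fun (_ : {l // l ≠ i}) => s).ncard :=
        ncard_le_ncard_of_injOn _ hmaps hinj (Finite.pi fun _ => hs)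
    _ = s.ncard ^ (Fintype.card ι - 1) := by
        simp [ncard_univ_pi, Fintype.card_subtype_compl]

theorem ncard_setOf_forall_mem_and_mem_range_le [Fintype γ] (hs : s.Finite) (hij : i ≠ j)
    (ψ : β → γ → β) :
    {T : ι → β | (∀ l, T l ∈ s) ∧ T i ∈ range (ψ (T j))}.ncard ≤
      Fintype.card γ * s.ncard ^ (Fintype.card ι - 1) := by
  have hcover : {T : ι → β | (∀ l, T l ∈ s) ∧ T i ∈ range (ψ (T j))} ⊆
      ⋃ c, {T : ι → β | (∀ l, T l ∈ s) ∧ T i = ψ (T j) c} := by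
    rintro T ⟨hT, c, hc⟩
    exact mem_iUnion.2 ⟨c, hT, hc.symm⟩
  calc _ ≤ (⋃ c, {T : ι → β | (∀ l, T l ∈ s) ∧ T i = ψ (T j) c}).ncard :=
        ncard_le_ncard hcover <| finite_iUnion fun c =>
          (Finite.pi fun _ => hs).subset fun T hT l _ => hT.1 l
    _ ≤ ∑ c, {T : ι → β | (∀ l, T l ∈ s) ∧ T i = ψ (T j) c}.ncard :=
        ncard_iUnion_le_of_fintype _
    _ ≤ ∑ _c : γ, s.ncard ^ (Fintype.card ι - 1) :=
        Finset.sum_le_sum fun c _ => ncard_setOf_forall_mem_and_eq_le hs hij (ψ · c)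
    _ = _ := by simp

end Set

open FreeGroup

def cyclicallyReducedOfLength (α : Type) [DecidableEq α] (n : ℕ) : Set (FreeGroup α) :=
  {g | CyclicallyReduced g ∧ wlen g = n}

section

variable {α : Type} [DecidableEq α]

theorem cyclicallyReduced_iff_isCyclicallyReduced {g : FreeGroup α} :
    CyclicallyReduced g ↔ IsCyclicallyReduced g.toWord := by
  simp only [CyclicallyReduced, isCyclicallyReduced_iff, isReduced_toWord, true_and]
  constructor
  · intro h a ha b hb hab
    by_contra h'
    exact h b a hb ha (Prod.ext hab.symm (Bool.eq_not_iff.2 (Ne.symm h')))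
  · rintro h x y hx hy rfl
    simpa using h y hy _ hx rfl

theorem finite_cyclicallyReducedOfLength [Finite α] (n : ℕ) :
    (cyclicallyReducedOfLength α n).Finite :=
  ((List.finite_length_eq (α × Bool) n).preimage toWord_injective.injOn).subset
    fun _ hg => hg.2

theorem inv_mem_cyclicallyReducedOfLength {g : FreeGroup α} {n : ℕ}
    (hg : g ∈ cyclicallyReducedOfLength α n) : g⁻¹ ∈ cyclicallyReducedOfLength α n := by
  obtain ⟨hcr, hlen⟩ := hg
  rw [cyclicallyReduced_iff_isCyclicallyReduced] at hcr
  refine ⟨?_, ?_⟩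
  · rw [cyclicallyReduced_iff_isCyclicallyReduced, toWord_inv]
    exact hcr.invRev
  · rwa [wlen, toWord_inv, invRev_length]

theorem pow_card_le_ncard_cyclicallyReducedOfLength [Finite α] (n : ℕ) :
    Nat.card α ^ n ≤ (cyclicallyReducedOfLength α n).ncard := by
  set word : (Fin n → α) → List (α × Bool) := fun σ => List.ofFn fun i => (σ i, true)
  have hword : ∀ σ, IsCyclicallyReduced (word σ) := fun σ =>
    isCyclicallyReduced_of_forall_snd_eq (b := true) (by simp [word, List.mem_ofFn])
  have htoWord : ∀ σ, (mk (word σ)).toWord = word σ := fun σ => by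
    rw [toWord_mk, (hword σ).isReduced.reduce_eq]
  have hmaps : ∀ σ ∈ (Set.univ : Set (Fin n → α)),
      mk (word σ) ∈ cyclicallyReducedOfLength α n := fun σ _ => by
    refine ⟨?_, ?_⟩
    · rw [cyclicallyReduced_iff_isCyclicallyReduced, htoWord]
      exact hword σ
    · simp [wlen, htoWord, word]
  have hinj : Set.InjOn (fun σ => mk (word σ)) Set.univ := by
    intro σ _ τ _ h
    have h' := congrArg toWord h
    simp only [htoWord, word, List.ofFn_inj] at h'
    funext i
    exact congrArg Prod.fst (congrFun h' i)
  calc Nat.card α ^ n = (Set.univ : Set (Fin n → α)).ncard := by simp [Nat.card_fun]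
    _ ≤ _ := Set.ncard_le_ncard_of_injOn _ hmaps hinj (finite_cyclicallyReducedOfLength n)

theorem exists_rotate_of_isConj {u v : FreeGroup α} {n : ℕ}
    (hu : u ∈ cyclicallyReducedOfLength α n) (hv : v ∈ cyclicallyReducedOfLength α n)
    (h : IsConj u v) : ∃ ρ : Fin (n + 1), u = mk (v.toWord.rotate ρ) := by
  simp only [cyclicallyReducedOfLength, Set.mem_ofPred_eq,
    cyclicallyReduced_iff_isCyclicallyReduced] at hu hv
  obtain ⟨ρ, hρ, hrot⟩ :=
    List.isRotated_iff_mod.1 (isRotated_toWord_of_isConj hu.1 hv.1 h).symm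
  refine ⟨⟨ρ, Nat.lt_succ_of_le (hv.2 ▸ hρ)⟩, ?_⟩
  rw [Fin.val_mk, hrot, mk_toWord]

end

def nonConjugateTuples (k m : ℕ) : Set (Fin m → FreeGroup (Fin k)) :=
  {T | T ∈ Cset k m ∧ ∀ i j, i ≠ j → ¬ IsConj (T i) (T j) ∧ ¬ IsConj (T i) (T j)⁻¹}

theorem setOf_mem_Cset_and_wlen_eq (k m n : ℕ) :
    {T | T ∈ Cset k m ∧ ∀ i, wlen (T i) = n} =
      Set.univ.pi fun _ => cyclicallyReducedOfLength (Fin k) n := by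
  ext T
  simp only [Cset, cyclicallyReducedOfLength, Set.mem_ofPred_eq, Set.mem_pi, Set.mem_univ,
    true_implies, forall_and]
  constructor
  · exact fun ⟨⟨hcr, _⟩, hlen⟩ => ⟨hcr, hlen⟩
  · exact fun ⟨hcr, hlen⟩ => ⟨⟨hcr, fun i j => by rw [hlen i, hlen j]⟩, hlen⟩

theorem gammaA_Cset (k m n : ℕ) :
    gammaA (Cset k m) n = (cyclicallyReducedOfLength (Fin k) n).ncard ^ m := by
  simp [gammaA, setOf_mem_Cset_and_wlen_eq, Set.ncard_univ_pi]

theorem setOf_mem_Cset_diff_subset (k m n : ℕ) :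
    {T | T ∈ Cset k m ∧ ∀ i, wlen (T i) = n} \
        {T | T ∈ nonConjugateTuples k m ∧ ∀ i, wlen (T i) = n} ⊆
      ⋃ p ∈ (Finset.univ : Finset (Fin m)).offDiag,
        {T | (∀ l, T l ∈ cyclicallyReducedOfLength (Fin k) n) ∧
          T p.1 ∈ Set.range fun q : Bool × Fin (n + 1) =>
            mk ((cond q.1 (T p.2) (T p.2)⁻¹).toWord.rotate q.2)} := by
  rintro T ⟨hT, hbad⟩
  have hT' : ∀ l, T l ∈ cyclicallyReducedOfLength (Fin k) n := fun l => by
    rw [setOf_mem_Cset_and_wlen_eq] at hT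
    exact hT l trivial
  obtain ⟨i, j, hij, hconj⟩ : ∃ i j, i ≠ j ∧ (IsConj (T i) (T j) ∨ IsConj (T i) (T j)⁻¹) := by
    by_contra! h
    exact hbad ⟨⟨hT.1, fun i j hij => h i j hij⟩, hT.2⟩
  simp only [Set.mem_iUnion, Finset.mem_offDiag, Finset.mem_univ, true_and]
  refine ⟨(i, j), hij, hT', ?_⟩
  rcases hconj with hconj | hconj
  · obtain ⟨ρ, hρ⟩ := exists_rotate_of_isConj (hT' i) (hT' j) hconj
    exact ⟨(true, ρ), hρ.symm⟩
  · obtain ⟨ρ, hρ⟩ :=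
      exists_rotate_of_isConj (hT' i) (inv_mem_cyclicallyReducedOfLength (hT' j)) hconj
    exact ⟨(false, ρ), hρ.symm⟩

theorem gammaA_nonConjugateTuples_le (k m n : ℕ) :
    gammaA (nonConjugateTuples k m) n ≤ gammaA (Cset k m) n :=
  Set.ncard_le_ncard (fun T hT => ⟨hT.1.1, hT.2⟩) <| by
    rw [setOf_mem_Cset_and_wlen_eq]
    exact Set.Finite.pi fun _ => finite_cyclicallyReducedOfLength n

theorem gammaA_Cset_le (k m n : ℕ) :
    gammaA (Cset k m) n ≤
      m ^ 2 * (2 * (n + 1) * (cyclicallyReducedOfLength (Fin k) n).ncard ^ (m - 1)) +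
        gammaA (nonConjugateTuples k m) n := by
  have hpi : (Set.univ.pi fun (_ : Fin m) => cyclicallyReducedOfLength (Fin k) n).Finite :=
    Set.Finite.pi fun _ => finite_cyclicallyReducedOfLength n
  calc gammaA (Cset k m) n
      ≤ ({T | T ∈ Cset k m ∧ ∀ i, wlen (T i) = n} \
          {T | T ∈ nonConjugateTuples k m ∧ ∀ i, wlen (T i) = n}).ncard +
        gammaA (nonConjugateTuples k m) n := by
        refine Set.ncard_le_ncard_sdiff_add_ncard _ _ ?_
        rw [← setOf_mem_Cset_and_wlen_eq] at hpi
        exact hpi.subset fun T hT => ⟨hT.1.1, hT.2⟩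
    _ ≤ _ := by
        gcongr ?_ + _
        refine (Set.ncard_le_ncard (setOf_mem_Cset_diff_subset k m n) ?_).trans ?_
        · exact hpi.subset (Set.iUnion₂_subset fun p _ T hT l _ => hT.1 l)
        refine (Finset.set_ncard_biUnion_le _ _).trans ?_
        refine (Finset.sum_le_card_nsmul _ _
          (2 * (n + 1) * (cyclicallyReducedOfLength (Fin k) n).ncard ^ (m - 1))
          fun p hp => ?_).trans ?_
        · simpa using Set.ncard_setOf_forall_mem_and_mem_range_le
            (finite_cyclicallyReducedOfLength n) (Finset.mem_offDiag.1 hp).2.2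
            fun v (q : Bool × Fin (n + 1)) => mk ((cond q.1 v v⁻¹).toWord.rotate q.2)
        · rw [smul_eq_mul, sq]
          gcongr
          simp [Finset.offDiag_card]

theorem abs_div_sub_one_le {x y B : ℝ} (hxy : x ≤ y) (hyx : y ≤ B + x) (hy : 0 < y) :
    |x / y - 1| ≤ B / y := by
  rw [abs_sub_comm, abs_of_nonneg (sub_nonneg.2 ((div_le_one hy).2 hxy)), one_sub_div hy.ne']
  gcongr
  linarith

theorem add_one_div_two_pow_le (n : ℕ) : ((n : ℝ) + 1) / 2 ^ n ≤ 2 * (3 / 4) ^ n := by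
  rw [div_le_iff₀ (by positivity), mul_assoc, ← mul_pow]
  have := one_add_mul_le_pow (show (-2 : ℝ) ≤ 1 / 2 by norm_num) n
  norm_num at this ⊢
  linarith

theorem abs_div_pow_sub_one_le {a c m n : ℕ} (hc : 2 ^ n ≤ c) (ha : a ≤ c ^ m)
    (hbad : c ^ m ≤ m ^ 2 * (2 * (n + 1) * c ^ (m - 1)) + a) :
    |(a : ℝ) / (c ^ m : ℕ) - 1| ≤ (4 * m ^ 2 + 1) * (3 / 4) ^ n := by
  have hc' : (2 : ℝ) ^ n ≤ c := by exact_mod_cast hc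
  have hc₀ : 0 < c := lt_of_lt_of_le (by positivity) hc
  calc _ ≤ ((m ^ 2 * (2 * (n + 1) * c ^ (m - 1)) : ℕ) : ℝ) / ((c ^ m : ℕ) : ℝ) :=
        abs_div_sub_one_le (by exact_mod_cast ha) (by exact_mod_cast hbad)
          (Nat.cast_pos.2 (pow_pos hc₀ m))
    _ = 2 * m ^ 2 * ((n + 1) / c) := by
        push_cast
        rcases m with _ | m
        · simp
        · rw [Nat.add_sub_cancel, pow_succ]
          field_simp
          ring
    _ ≤ 2 * m ^ 2 * ((n + 1) / 2 ^ n) := by gcongr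
    _ ≤ 2 * m ^ 2 * (2 * (3 / 4) ^ n) := by gcongr; exact add_one_div_two_pow_le n
    _ ≤ (4 * m ^ 2 + 1) * (3 / 4) ^ n := by nlinarith [pow_pos (by norm_num : (0 : ℝ) < 3 / 4) n]

theorem statement11_general (k m : ℕ) (hk : 2 ≤ k) :
    ExpGenericIn {T : Fin m → FreeGroup (Fin k) | T ∈ Cset k m ∧
      ∀ i j, i ≠ j → ¬ IsConj (T i) (T j) ∧ ¬ IsConj (T i) (T j)⁻¹} := by
  show ExpGenericIn (nonConjugateTuples k m)
  refine ⟨fun T hT => hT.1, 4 * m ^ 2 + 1, by positivity, 3 / 4, by norm_num, by norm_num,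
    fun n => ?_⟩
  have hc : 2 ^ n ≤ (cyclicallyReducedOfLength (Fin k) n).ncard :=
    (Nat.pow_le_pow_left hk n).trans
      (by simpa using pow_card_le_ncard_cyclicallyReducedOfLength (α := Fin k) n)
  have hU := gammaA_nonConjugateTuples_le k m n
  have hbad := gammaA_Cset_le k m n
  rw [gammaA_Cset] at hU hbad ⊢
  exact abs_div_pow_sub_one_le hc hU hbad

theorem statement11 (k m : ℕ) (hk : 2 ≤ k) (hm : 1 ≤ m) :
    ExpGenericIn {T : Fin m → FreeGroup (Fin k) | T ∈ Cset k m ∧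
      ∀ i j, i ≠ j → ¬ IsConj (T i) (T j) ∧ ¬ IsConj (T i) (T j)⁻¹} :=
  statement11_general k m hk
end

section
/- Let Γ be a finite connected A-graph with a vertex x_0 such that the induced homomorphism p_*: π_1(Γ, x_0) → π_1(R_A, v_0) ≅ F(A) of the unique label-preserving graph map p: Γ → R_A is surjective. Then there exists a finite sequence Γ = Γ_0, Γ_1, …, Γ_n = R_A of A-graphs such that each Γ_i is obtained from Γ_{i−1} by a single fold. -/
/-!
STATEMENT 13 (Stallings): if Γ is a finite connected A-graph with base
vertex x₀ such that p₀ : π₁(Γ,x₀) → π₁(R_A) ≅ F(A) is surjective (i.e.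
every element of F(A) is represented by the label of a closed walk at x₀),
then a finite sequence of folds transforms Γ into R_A.
-/

/-- A finite `A`-graph for `A = {a₁,…,a_k}`: a finite directed graph with
edges labeled by elements of `Fin k`. -/
structure AGraph (k : ℕ) : Type 1 where
  V : Type
  E : Type
  finV : Finite V
  finE : Finite E
  o : E → V
  t : E → V
  lab : E → Fin k

namespace AGraph

variable {k : ℕ}

/-- The rose `R_A`: one vertex and `k` loop edges labeled `a₁,…,a_k`. -/
def RA (k : ℕ) : AGraph k where
  V := Unit
  E := Fin k
  finV := inferInstance
  finE := inferInstance
  o := fun _ => ()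
  t := fun _ => ()
  lab := id

/-- A label-preserving morphism of `A`-graphs. -/
structure Hom (Γ Δ : AGraph k) where
  onV : Γ.V → Δ.V
  onE : Γ.E → Δ.E
  map_o : ∀ e, Δ.o (onE e) = onV (Γ.o e)
  map_t : ∀ e, Δ.t (onE e) = onV (Γ.t e)
  map_lab : ∀ e, Δ.lab (onE e) = Γ.lab e

/-- Isomorphism of `A`-graphs. -/
def Iso (Γ Δ : AGraph k) : Prop :=
  ∃ φ : Hom Γ Δ, Function.Bijective φ.onV ∧ Function.Bijective φ.onE

/-- `Δ` is obtained from `Γ` by a single Stallings fold: two distinct edges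
with the same label and the same initial (or the same terminal) vertex are
identified, together with their terminal (resp. initial) vertices, and
nothing else is identified. -/
def IsFold (Γ Δ : AGraph k) : Prop :=
  ∃ φ : Hom Γ Δ, ∃ e₁ e₂ : Γ.E, e₁ ≠ e₂ ∧ Γ.lab e₁ = Γ.lab e₂ ∧
    Function.Surjective φ.onV ∧ Function.Surjective φ.onE ∧
    φ.onE e₁ = φ.onE e₂ ∧
    (∀ f f', φ.onE f = φ.onE f' →
      f = f' ∨ (f = e₁ ∧ f' = e₂) ∨ (f = e₂ ∧ f' = e₁)) ∧
    ((Γ.o e₁ = Γ.o e₂ ∧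
        ∀ v v', φ.onV v = φ.onV v' →
          v = v' ∨ (v = Γ.t e₁ ∧ v' = Γ.t e₂) ∨ (v = Γ.t e₂ ∧ v' = Γ.t e₁)) ∨
     (Γ.t e₁ = Γ.t e₂ ∧
        ∀ v v', φ.onV v = φ.onV v' →
          v = v' ∨ (v = Γ.o e₁ ∧ v' = Γ.o e₂) ∨ (v = Γ.o e₂ ∧ v' = Γ.o e₁)))

/-- The initial vertex of a step of a walk (an edge together with the
direction in which it is traversed). -/
def stepStart (Γ : AGraph k) (s : Γ.E × Bool) : Γ.V :=
  if s.2 then Γ.o s.1 else Γ.t s.1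

/-- The terminal vertex of a step of a walk. -/
def stepEnd (Γ : AGraph k) (s : Γ.E × Bool) : Γ.V :=
  if s.2 then Γ.t s.1 else Γ.o s.1

/-- A walk (edge-path) in `Γ`: consecutive steps match up. -/
def IsWalk (Γ : AGraph k) (l : List (Γ.E × Bool)) : Prop :=
  l.Chain' fun s s' => Γ.stepEnd s = Γ.stepStart s'

/-- The label of a walk, as a word in the letters `a_i^{±1}`. -/
def walkLabel (Γ : AGraph k) (l : List (Γ.E × Bool)) : List (Fin k × Bool) :=
  l.map fun s => (Γ.lab s.1, s.2)

/-- A walk from `v` to `w` (the empty walk only when `v = w`). -/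
def IsWalkFromTo (Γ : AGraph k) (v w : Γ.V) (l : List (Γ.E × Bool)) : Prop :=
  Γ.IsWalk l ∧ (∀ s ∈ l.head?, Γ.stepStart s = v) ∧
    (∀ s ∈ l.getLast?, Γ.stepEnd s = w) ∧ (l = [] → v = w)

/-- A word is readable in `Γ` if it is the label of some edge-path in `Γ`. -/
def Readable (Γ : AGraph k) (w : List (Fin k × Bool)) : Prop :=
  ∃ l : List (Γ.E × Bool), Γ.IsWalk l ∧ Γ.walkLabel l = w

/-- `Γ` is connected. -/
def Connected (Γ : AGraph k) : Prop :=
  ∀ v w : Γ.V, ∃ l, Γ.IsWalkFromTo v w l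

/-- The degree of a vertex (a loop at `v` contributes 2). -/
noncomputable def degree (Γ : AGraph k) (v : Γ.V) : ℕ :=
  Nat.card {e : Γ.E // Γ.o e = v} + Nat.card {e : Γ.E // Γ.t e = v}

/-- A core graph: finite, connected, and with no vertices of degree one. -/
def IsCore (Γ : AGraph k) : Prop :=
  Γ.Connected ∧ ∀ v : Γ.V, Γ.degree v ≠ 1

/-- `Γ` (assumed connected) has rank `r`, i.e. first Betti number
`|E| - |V| + 1 = r`. -/
def HasRank (Γ : AGraph k) (r : ℕ) : Prop :=
  Nat.card Γ.E + 1 = Nat.card Γ.V + r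

/-- `Γ` folds onto `R_A`: a finite sequence of folds transforms `Γ` into a
graph isomorphic to `R_A`. -/
def FoldsOntoRA (Γ : AGraph k) : Prop :=
  ∃ n : ℕ, ∃ seq : Fin (n + 1) → AGraph k, seq 0 = Γ ∧
    Iso (seq (Fin.last n)) (RA k) ∧
    ∀ i : Fin n, IsFold (seq i.castSucc) (seq i.succ)

end AGraph

/-!
Induct on the number of edges. If two edges with the same label share their origin or their
terminus, folding them yields a graph with fewer edges, and since the quotient map carries walks
to walks, connectivity and surjectivity onto `F(A)` survive the fold.

Otherwise `Γ` is folded, and then a backtracking `e e⁻¹` can be cut out of any walk without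
moving its endpoints. Hence every free reduction of the label of a closed walk at `x₀` is again
read by a closed walk at `x₀`; for the generator `aᵢ` this gives a loop labelled `aᵢ` at `x₀`.
In a folded graph these loops are the only edges at `x₀`, so by connectivity `x₀` is the only
vertex, and `p : Γ → R_A` is an isomorphism.
-/

section PairRel

variable {α β : Type*}

def pairRel (a b : α) (x y : α) : Prop :=
  x = y ∨ (x = a ∧ y = b) ∨ (x = b ∧ y = a)

lemma pairRel.symm {a b x y : α} (h : pairRel a b x y) : pairRel a b y x := by
  rcases h with rfl | ⟨rfl, rfl⟩ | ⟨rfl, rfl⟩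
  exacts [Or.inl rfl, Or.inr (Or.inr ⟨rfl, rfl⟩), Or.inr (Or.inl ⟨rfl, rfl⟩)]

lemma pairRel.trans {a b x y z : α} (h₁ : pairRel a b x y) (h₂ : pairRel a b y z) :
    pairRel a b x z := by
  rcases h₁ with rfl | ⟨rfl, rfl⟩ | ⟨rfl, rfl⟩ <;>
    rcases h₂ with rfl | ⟨h, rfl⟩ | ⟨h, rfl⟩ <;> simp_all [pairRel]

def pairSetoid (a b : α) : Setoid α :=
  ⟨pairRel a b, ⟨fun _ => Or.inl rfl, pairRel.symm, pairRel.trans⟩⟩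

lemma pairRel.map {f : α → β} {a b : α} {c d : β} (h : pairRel c d (f a) (f b)) {x y : α}
    (hxy : pairRel a b x y) : pairRel c d (f x) (f y) := by
  rcases hxy with rfl | ⟨rfl, rfl⟩ | ⟨rfl, rfl⟩
  exacts [Or.inl rfl, h, h.symm]

end PairRel

namespace AGraph

variable {k : ℕ}

section Walks

variable (Γ : AGraph k)

lemma isWalk_iff {l : List (Γ.E × Bool)} :
    Γ.IsWalk l ↔ l.IsChain fun s s' => Γ.stepEnd s = Γ.stepStart s' :=
  Iff.rfl

@[simp]
lemma isWalkFromTo_nil {v w : Γ.V} : Γ.IsWalkFromTo v w [] ↔ v = w := by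
  simp [IsWalkFromTo, isWalk_iff]

lemma isWalkFromTo_cons {v w : Γ.V} {s : Γ.E × Bool} {l : List (Γ.E × Bool)} :
    Γ.IsWalkFromTo v w (s :: l) ↔ Γ.stepStart s = v ∧ Γ.IsWalkFromTo (Γ.stepEnd s) w l := by
  cases l with
  | nil => simp [IsWalkFromTo, isWalk_iff, eq_comm]
  | cons s' l =>
    simp only [IsWalkFromTo, isWalk_iff, List.isChain_cons_cons, List.head?_cons,
      List.getLast?_cons_cons, Option.mem_def, Option.some.injEq, forall_eq', reduceCtorEq,
      false_implies, and_true]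
    tauto

lemma isWalkFromTo_append {v w : Γ.V} {l₁ l₂ : List (Γ.E × Bool)} :
    Γ.IsWalkFromTo v w (l₁ ++ l₂) ↔ ∃ u, Γ.IsWalkFromTo v u l₁ ∧ Γ.IsWalkFromTo u w l₂ := by
  induction l₁ generalizing v with
  | nil => simp
  | cons s l₁ ih => simp only [List.cons_append, isWalkFromTo_cons, ih]; tauto

/-- `p_* : π₁(Γ, x) → F(A)` is surjective. -/
def CoversFreeGroupAt (x : Γ.V) : Prop :=
  ∀ g : FreeGroup (Fin k), ∃ l : List (Γ.E × Bool),
    Γ.IsWalkFromTo x x l ∧ FreeGroup.mk (Γ.walkLabel l) = g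

end Walks

namespace Hom

variable {Γ Δ : AGraph k} (φ : Hom Γ Δ)

def mapStep (s : Γ.E × Bool) : Δ.E × Bool :=
  (φ.onE s.1, s.2)

lemma stepStart_mapStep (s : Γ.E × Bool) :
    Δ.stepStart (φ.mapStep s) = φ.onV (Γ.stepStart s) := by
  cases s with | mk e b => cases b <;> simp [stepStart, mapStep, φ.map_o, φ.map_t]

lemma stepEnd_mapStep (s : Γ.E × Bool) : Δ.stepEnd (φ.mapStep s) = φ.onV (Γ.stepEnd s) := by
  cases s with | mk e b => cases b <;> simp [stepEnd, mapStep, φ.map_o, φ.map_t]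

lemma walkLabel_map (l : List (Γ.E × Bool)) :
    Δ.walkLabel (l.map φ.mapStep) = Γ.walkLabel l := by
  simp [walkLabel, mapStep, φ.map_lab]

lemma isWalkFromTo_map {v w : Γ.V} {l : List (Γ.E × Bool)} (hl : Γ.IsWalkFromTo v w l) :
    Δ.IsWalkFromTo (φ.onV v) (φ.onV w) (l.map φ.mapStep) := by
  induction l generalizing v with
  | nil => simp_all
  | cons s l ih =>
    rw [isWalkFromTo_cons] at hl
    rw [List.map_cons, isWalkFromTo_cons]
    exact ⟨by rw [φ.stepStart_mapStep, hl.1], φ.stepEnd_mapStep s ▸ ih hl.2⟩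

lemma connected (hV : Function.Surjective φ.onV) (hΓ : Γ.Connected) : Δ.Connected := by
  intro v' w'
  obtain ⟨v, rfl⟩ := hV v'
  obtain ⟨w, rfl⟩ := hV w'
  obtain ⟨l, hl⟩ := hΓ v w
  exact ⟨l.map φ.mapStep, φ.isWalkFromTo_map hl⟩

lemma coversFreeGroupAt {x : Γ.V} (hΓ : Γ.CoversFreeGroupAt x) :
    Δ.CoversFreeGroupAt (φ.onV x) := by
  intro g
  obtain ⟨l, hl, rfl⟩ := hΓ g
  exact ⟨l.map φ.mapStep, φ.isWalkFromTo_map hl, by rw [φ.walkLabel_map]⟩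

end Hom

/-- The graph map `p : Γ → R_A`. -/
def toRA (Γ : AGraph k) : Hom Γ (RA k) :=
  ⟨fun _ => (), Γ.lab, fun _ => rfl, fun _ => rfl, fun _ => rfl⟩

section Quotient

variable (Γ : AGraph k) (sV : Setoid Γ.V) (sE : Setoid Γ.E)
  (ho : ∀ e e', sE e e' → sV (Γ.o e) (Γ.o e')) (ht : ∀ e e', sE e e' → sV (Γ.t e) (Γ.t e'))
  (hlab : ∀ e e', sE e e' → Γ.lab e = Γ.lab e')

def quotient : AGraph k where
  V := Quotient sV
  E := Quotient sE
  finV := have := Γ.finV; Quotient.finite sV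
  finE := have := Γ.finE; Quotient.finite sE
  o := Quotient.map Γ.o ho
  t := Quotient.map Γ.t ht
  lab := Quotient.lift Γ.lab hlab

def toQuotient : Hom Γ (Γ.quotient sV sE ho ht hlab) where
  onV := Quotient.mk sV
  onE := Quotient.mk sE
  map_o _ := rfl
  map_t _ := rfl
  map_lab _ := rfl

end Quotient

lemma IsFold.card_edges_lt {Γ Δ : AGraph k} (h : IsFold Γ Δ) : Nat.card Δ.E < Nat.card Γ.E := by
  obtain ⟨φ, e₁, e₂, hne, -, -, hsurj, heq, -⟩ := h
  have := Γ.finE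
  have := Finite.of_surjective _ hsurj
  have := Fintype.ofFinite Γ.E
  have := Fintype.ofFinite Δ.E
  rw [Nat.card_eq_fintype_card, Nat.card_eq_fintype_card]
  exact Fintype.card_lt_of_surjective_not_injective _ hsurj fun hinj => hne (hinj heq)

def IsFolded (Γ : AGraph k) : Prop :=
  ∀ e e' : Γ.E, Γ.lab e = Γ.lab e' → (Γ.o e = Γ.o e' ∨ Γ.t e = Γ.t e') → e = e'

lemma exists_isFold_of_not_isFolded {Γ : AGraph k} (h : ¬ Γ.IsFolded) : ∃ Δ, IsFold Γ Δ := by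
  simp only [IsFolded, not_forall] at h
  obtain ⟨e₁, e₂, hlab, hends, hne⟩ := h
  have hlab' (e e' : Γ.E) (hee' : pairRel e₁ e₂ e e') : Γ.lab e = Γ.lab e' := by
    rcases hee' with rfl | ⟨rfl, rfl⟩ | ⟨rfl, rfl⟩ <;> simp [hlab]
  rcases hends with ho | ht
  · exact ⟨_, Γ.toQuotient (pairSetoid (Γ.t e₁) (Γ.t e₂)) (pairSetoid e₁ e₂)
      (fun _ _ => pairRel.map (Or.inl ho)) (fun _ _ => pairRel.map (Or.inr (Or.inl ⟨rfl, rfl⟩)))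
      hlab', e₁, e₂, hne, hlab, Quotient.mk_surjective, Quotient.mk_surjective,
      Quotient.sound (Or.inr (Or.inl ⟨rfl, rfl⟩)), fun _ _ => Quotient.exact,
      Or.inl ⟨ho, fun _ _ => Quotient.exact⟩⟩
  · exact ⟨_, Γ.toQuotient (pairSetoid (Γ.o e₁) (Γ.o e₂)) (pairSetoid e₁ e₂)
      (fun _ _ => pairRel.map (Or.inr (Or.inl ⟨rfl, rfl⟩))) (fun _ _ => pairRel.map (Or.inl ht))
      hlab', e₁, e₂, hne, hlab, Quotient.mk_surjective, Quotient.mk_surjective,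
      Quotient.sound (Or.inr (Or.inl ⟨rfl, rfl⟩)), fun _ _ => Quotient.exact,
      Or.inr ⟨ht, fun _ _ => Quotient.exact⟩⟩

namespace IsFolded

variable {Γ : AGraph k}

lemma stepEnd_eq_of_backtrack (hF : Γ.IsFolded) {s s' : Γ.E × Bool}
    (hss' : Γ.stepEnd s = Γ.stepStart s')
    (hlab : Γ.lab s.1 = Γ.lab s'.1) (hb : s'.2 = !s.2) : Γ.stepEnd s' = Γ.stepStart s := by
  obtain ⟨e, b⟩ := s
  obtain ⟨e', b'⟩ := s'
  obtain rfl : b' = !b := hb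
  obtain rfl : e = e' := by
    cases b
    exacts [hF e e' hlab (Or.inl hss'), hF e e' hlab (Or.inr hss')]
  cases b <;> rfl

lemma exists_walk_of_redStep (hF : Γ.IsFolded) {v w : Γ.V} {L L' : List (Fin k × Bool)}
    (hLL' : FreeGroup.Red.Step L L') {l : List (Γ.E × Bool)} (hl : Γ.IsWalkFromTo v w l)
    (hlab : Γ.walkLabel l = L) : ∃ l', Γ.IsWalkFromTo v w l' ∧ Γ.walkLabel l' = L' := by
  obtain ⟨L₁, L₂, x, b⟩ := hLL'
  obtain ⟨l₁, _, rfl, hl₁, hrest⟩ := List.map_eq_append_iff.1 hlab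
  obtain ⟨s, _, rfl, hs, hrest⟩ := List.map_eq_cons_iff.1 hrest
  obtain ⟨s', l₂, rfl, hs', hl₂⟩ := List.map_eq_cons_iff.1 hrest
  obtain ⟨u, hvu, hu⟩ := Γ.isWalkFromTo_append.1 hl
  simp only [isWalkFromTo_cons] at hu
  obtain ⟨hsu, hss', hrest⟩ := hu
  simp only [Prod.mk.injEq] at hs hs'
  have hback := hF.stepEnd_eq_of_backtrack hss'.symm (hs.1.trans hs'.1.symm)
    (hs'.2.trans (congrArg (!·) hs.2.symm))
  refine ⟨l₁ ++ l₂, Γ.isWalkFromTo_append.2 ⟨u, hvu, ?_⟩, ?_⟩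
  · rwa [hback, hsu] at hrest
  · simp only [walkLabel, List.map_append] at hl₁ hl₂ ⊢
    rw [hl₁, hl₂]

lemma exists_walk_of_red (hF : Γ.IsFolded) {v w : Γ.V} {L L' : List (Fin k × Bool)}
    (hLL' : FreeGroup.Red L L') {l : List (Γ.E × Bool)} (hl : Γ.IsWalkFromTo v w l)
    (hlab : Γ.walkLabel l = L) : ∃ l', Γ.IsWalkFromTo v w l' ∧ Γ.walkLabel l' = L' := by
  induction hLL' with
  | refl => exact ⟨l, hl, hlab⟩
  | tail _ hstep ih =>
    obtain ⟨l', hl', hlab'⟩ := ih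
    exact hF.exists_walk_of_redStep hstep hl' hlab'

lemma exists_loop (hF : Γ.IsFolded) {x : Γ.V} (hx : Γ.CoversFreeGroupAt x) (i : Fin k) :
    ∃ e, Γ.o e = x ∧ Γ.t e = x ∧ Γ.lab e = i := by
  obtain ⟨l, hl, hmk⟩ := hx (FreeGroup.of i)
  have hred : FreeGroup.Red (Γ.walkLabel l) [(i, true)] := by
    rw [← FreeGroup.toWord_of, ← hmk, FreeGroup.toWord_mk]
    exact FreeGroup.reduce.red
  obtain ⟨l', hl', hlab'⟩ := hF.exists_walk_of_red hred hl rfl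
  obtain ⟨⟨e, b⟩, rfl, hs⟩ := List.map_eq_singleton_iff.1 hlab'
  simp only [Prod.mk.injEq] at hs
  obtain ⟨rfl, rfl⟩ := hs
  simp only [isWalkFromTo_cons, isWalkFromTo_nil] at hl'
  exact ⟨e, hl'.1, hl'.2, rfl⟩

lemma eq_of_isWalkFromTo (hF : Γ.IsFolded) {x w : Γ.V}
    (hloops : ∀ i, ∃ e, Γ.o e = x ∧ Γ.t e = x ∧ Γ.lab e = i)
    {l : List (Γ.E × Bool)} (hl : Γ.IsWalkFromTo x w l) : w = x := by
  induction l with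
  | nil => exact ((Γ.isWalkFromTo_nil).1 hl).symm
  | cons s l ih =>
    rw [isWalkFromTo_cons] at hl
    obtain ⟨ℓ, hℓo, hℓt, hℓlab⟩ := hloops (Γ.lab s.1)
    -- an edge at `x` shares its label and an endpoint with the loop `ℓ`, so it is `ℓ`
    obtain ⟨e, b⟩ := s
    obtain rfl : e = ℓ := by
      cases b
      exacts [hF e ℓ hℓlab.symm (Or.inr (hl.1.trans hℓt.symm)),
        hF e ℓ hℓlab.symm (Or.inl (hl.1.trans hℓo.symm))]
    refine ih ?_
    cases b <;> simpa [stepEnd, hℓo, hℓt] using hl.2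

lemma iso_RA (hF : Γ.IsFolded) (hconn : Γ.Connected) {x : Γ.V} (hx : Γ.CoversFreeGroupAt x) :
    Iso Γ (RA k) := by
  have hloops := hF.exists_loop hx
  have hall (v : Γ.V) : v = x := by
    obtain ⟨l, hl⟩ := hconn x v
    exact hF.eq_of_isWalkFromTo hloops hl
  refine ⟨Γ.toRA, ⟨fun v v' _ => (hall v).trans (hall v').symm, fun _ => ⟨x, rfl⟩⟩,
    fun e e' he => hF e e' he (Or.inl ((hall _).trans (hall _).symm)), fun i => ?_⟩
  obtain ⟨e, -, -, he⟩ := hloops i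
  exact ⟨e, he⟩

end IsFolded

lemma FoldsOntoRA.of_isFold {Γ Δ : AGraph k} (hfold : IsFold Γ Δ) (hΔ : Δ.FoldsOntoRA) :
    Γ.FoldsOntoRA := by
  obtain ⟨n, seq, rfl, hlast, hsteps⟩ := hΔ
  refine ⟨n + 1, Fin.cons Γ seq, rfl, by rwa [← Fin.succ_last, Fin.cons_succ], fun i => ?_⟩
  induction i using Fin.cases with
  | zero => exact hfold
  | succ j => simpa [← Fin.succ_castSucc] using hsteps j

theorem foldsOntoRA_of_coversFreeGroupAt {Γ : AGraph k} (hconn : Γ.Connected) {x : Γ.V}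
    (hx : Γ.CoversFreeGroupAt x) : Γ.FoldsOntoRA := by
  induction hn : Nat.card Γ.E using Nat.strong_induction_on generalizing Γ with
  | _ n ih =>
    by_cases hF : Γ.IsFolded
    · exact ⟨0, fun _ => Γ, rfl, hF.iso_RA hconn hx, fun i => i.elim0⟩
    obtain ⟨Δ, hfold⟩ := exists_isFold_of_not_isFolded hF
    have ⟨φ, _, _, _, _, hV, _⟩ := hfold
    exact .of_isFold hfold <| ih _ (hn ▸ hfold.card_edges_lt) (φ.connected hV hconn)
      (φ.coversFreeGroupAt hx) rfl

end AGraph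

theorem statement13 (k : ℕ) (Γ : AGraph k) (hconn : Γ.Connected) (x₀ : Γ.V)
    (hsurj : ∀ g : FreeGroup (Fin k), ∃ l : List (Γ.E × Bool),
      Γ.IsWalkFromTo x₀ x₀ l ∧ FreeGroup.mk (Γ.walkLabel l) = g) :
    AGraph.FoldsOntoRA Γ :=
  AGraph.foldsOntoRA_of_coversFreeGroupAt hconn hsurj
end

section
/- Let Γ be a finite core A-graph of rank k (where A = {a_1,…,a_k}). If Γ can be transformed into R_A by a single fold, then there exists a freely reduced word of length 2 in F(A) that is not the label of any reduced edge-path in Γ. -/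
namespace AGraph

variable {k : ℕ}

/-! ### Auxiliary lemmas -/

@[simp] lemma stepStart_true (Γ : AGraph k) (e : Γ.E) :
    Γ.stepStart (e, true) = Γ.o e := rfl

@[simp] lemma stepStart_false (Γ : AGraph k) (e : Γ.E) :
    Γ.stepStart (e, false) = Γ.t e := rfl

@[simp] lemma stepEnd_true (Γ : AGraph k) (e : Γ.E) :
    Γ.stepEnd (e, true) = Γ.t e := rfl

@[simp] lemma stepEnd_false (Γ : AGraph k) (e : Γ.E) :
    Γ.stepEnd (e, false) = Γ.o e := rfl

lemma stepEnd_not (Γ : AGraph k) (e : Γ.E) (d : Bool) :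
    Γ.stepEnd (e, !d) = Γ.stepStart (e, d) := by cases d <;> simp

/-- Key non-readability lemma: if every `a`-labeled edge, traversed in the
direction `δ`, starts at `u`, and every `b`-labeled edge, traversed in the
direction `ε`, ends at `z ≠ u`, then `b^ε a^δ` is not readable. -/
lemma key_not_readable (Γ : AGraph k) (a b : Fin k) (δ ε : Bool) (u z : Γ.V)
    (hz : z ≠ u)
    (hA : ∀ e, Γ.lab e = a → Γ.stepStart (e, δ) = u)
    (hB : ∀ e, Γ.lab e = b → Γ.stepEnd (e, ε) = z) :
    ¬ Γ.Readable [(b, ε), (a, δ)] := by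
  rintro ⟨l, hwalk, hlab⟩
  obtain - | ⟨⟨g₁, d₁⟩, - | ⟨⟨g₂, d₂⟩, - | ⟨s, l⟩⟩⟩ := l <;>
    simp [walkLabel] at hlab
  obtain ⟨⟨hb1, hb2⟩, ha1, ha2⟩ := hlab
  have hchain : Γ.stepEnd (g₁, d₁) = Γ.stepStart (g₂, d₂) :=
    (List.isChain_cons_cons.mp hwalk).1
  subst hb2 ha2
  exact hz ((hB g₁ hb1) ▸ (hA g₂ ha1) ▸ hchain)

/-- The main combinatorial lemma. -/
lemma exists_unreadable (Γ : AGraph k)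
    (hdeg : ∀ v, Γ.degree v ≠ 1) (δ : Bool) (e₁ e₂ : Γ.E) (u : Γ.V)
    (hlab : ∀ g g', Γ.lab g = Γ.lab g' →
      g = g' ∨ (g = e₁ ∧ g' = e₂) ∨ (g = e₂ ∧ g' = e₁))
    (hu₁ : Γ.stepStart (e₁, δ) = u) (hu₂ : Γ.stepStart (e₂, δ) = u)
    (hne : Γ.stepEnd (e₁, δ) ≠ Γ.stepEnd (e₂, δ))
    (hue : Γ.stepEnd (e₁, δ) = u) :
    ∃ w : FreeGroup (Fin k), w.toWord.length = 2 ∧ ¬ Γ.Readable w.toWord := by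
  classical
  haveI := Γ.finE
  set a := Γ.lab e₁ with ha
  set z := Γ.stepEnd (e₂, δ) with hzdef
  have hz : z ≠ u := fun h => hne (hue.trans h.symm)
  have hA : ∀ e, Γ.lab e = a → Γ.stepStart (e, δ) = u := by
    intro e h
    rcases hlab e e₁ h with rfl | ⟨rfl, -⟩ | ⟨rfl, -⟩ <;> assumption
  -- degree decomposition
  have hdz : Γ.degree z = Nat.card {e : Γ.E // Γ.stepStart (e, δ) = z}
      + Nat.card {e : Γ.E // Γ.stepEnd (e, δ) = z} := by
    cases δ <;> simp [degree] <;> exact Nat.add_comm _ _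
  haveI : Nonempty {e : Γ.E // Γ.stepEnd (e, δ) = z} := ⟨⟨e₂, rfl⟩⟩
  have h1 : 0 < Nat.card {e : Γ.E // Γ.stepEnd (e, δ) = z} := Nat.card_pos
  have h2 : 2 ≤ Γ.degree z := by
    have := hdeg z; omega
  -- find an edge incident to z other than e₁, e₂
  have hf : ∃ f, (Γ.stepStart (f, δ) = z ∨ Γ.stepEnd (f, δ) = z)
      ∧ f ≠ e₁ ∧ f ≠ e₂ := by
    by_contra h
    push_neg at h
    have hmem : ∀ f, (Γ.stepStart (f, δ) = z ∨ Γ.stepEnd (f, δ) = z) →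
        f = e₁ ∨ f = e₂ := by
      intro f hfz
      by_cases hf1 : f = e₁
      · exact Or.inl hf1
      · exact Or.inr (h f hfz hf1)
    haveI : IsEmpty {e : Γ.E // Γ.stepStart (e, δ) = z} := by
      constructor
      rintro ⟨e, he⟩
      rcases hmem e (Or.inl he) with rfl | rfl
      · exact hz (he.symm.trans hu₁)
      · exact hz (he.symm.trans hu₂)
    haveI : Subsingleton {e : Γ.E // Γ.stepEnd (e, δ) = z} := by
      constructor
      rintro ⟨e, he⟩ ⟨e', he'⟩
      have h1 : e = e₂ := by
        rcases hmem e (Or.inr he) with rfl | rfl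
        · exact absurd (hue.symm.trans he) hz.symm
        · rfl
      have h2 : e' = e₂ := by
        rcases hmem e' (Or.inr he') with rfl | rfl
        · exact absurd (hue.symm.trans he') hz.symm
        · rfl
      subst h1; subst h2; rfl
    have hle : Nat.card {e : Γ.E // Γ.stepEnd (e, δ) = z} ≤ 1 :=
      Finite.card_le_one_iff_subsingleton.mpr ‹_›
    rw [hdz, Nat.card_of_isEmpty] at h2
    omega
  obtain ⟨f, hfz, hf1, hf2⟩ := hf
  set b := Γ.lab f with hb
  have hba : b ≠ a := by
    intro h
    rcases hlab f e₁ h with rfl | ⟨rfl, -⟩ | ⟨rfl, -⟩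
    · exact hf1 rfl
    · exact hf1 rfl
    · exact hf2 rfl
  have hB : ∀ g, Γ.lab g = b → g = f := by
    intro g h
    rcases hlab g f h with rfl | ⟨rfl, rfl⟩ | ⟨rfl, rfl⟩
    · rfl
    · exact absurd rfl hf2
    · exact absurd rfl hf1
  set ε : Bool := if Γ.stepEnd (f, δ) = z then δ else !δ with hε
  have hfe : Γ.stepEnd (f, ε) = z := by
    by_cases hh : Γ.stepEnd (f, δ) = z
    · rw [hε, if_pos hh]; exact hh
    · rw [hε, if_neg hh, stepEnd_not]
      exact hfz.resolve_right hh
  have hw : (FreeGroup.mk [(b, ε), (a, δ)]).toWord = [(b, ε), (a, δ)] := by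
    rw [FreeGroup.toWord_mk]
    simp [FreeGroup.reduce, hba]
  refine ⟨FreeGroup.mk [(b, ε), (a, δ)], by rw [hw]; rfl, ?_⟩
  rw [hw]
  exact key_not_readable Γ a b δ ε u z hz hA
    (fun e he => by rw [hB e he]; exact hfe)

/-- Variant of `exists_unreadable` where the common start vertex coincides
with one of the two end vertices. -/
lemma exists_unreadable' (Γ : AGraph k)
    (hdeg : ∀ v, Γ.degree v ≠ 1) (δ : Bool) (e₁ e₂ : Γ.E)
    (hlab : ∀ g g', Γ.lab g = Γ.lab g' →
      g = g' ∨ (g = e₁ ∧ g' = e₂) ∨ (g = e₂ ∧ g' = e₁))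
    (hss : Γ.stepStart (e₁, δ) = Γ.stepStart (e₂, δ))
    (hne : Γ.stepEnd (e₁, δ) ≠ Γ.stepEnd (e₂, δ))
    (huor : Γ.stepStart (e₁, δ) = Γ.stepEnd (e₁, δ) ∨
      Γ.stepStart (e₁, δ) = Γ.stepEnd (e₂, δ)) :
    ∃ w : FreeGroup (Fin k), w.toWord.length = 2 ∧ ¬ Γ.Readable w.toWord := by
  rcases huor with h | h
  · exact exists_unreadable Γ hdeg δ e₁ e₂ _ hlab rfl hss.symm hne h.symm
  · have hlab' : ∀ g g', Γ.lab g = Γ.lab g' →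
        g = g' ∨ (g = e₂ ∧ g' = e₁) ∨ (g = e₁ ∧ g' = e₂) := by
      intro g g' hgg
      rcases hlab g g' hgg with h' | h' | h' <;> tauto
    exact exists_unreadable Γ hdeg δ e₂ e₁ (Γ.stepStart (e₁, δ)) hlab'
      hss.symm rfl hne.symm h.symm

end AGraph

theorem statement14 (k : ℕ) (Γ : AGraph k) (hcore : Γ.IsCore)
    (hrank : Γ.HasRank k)
    (hfold : ∃ Δ : AGraph k, AGraph.IsFold Γ Δ ∧ AGraph.Iso Δ (AGraph.RA k)) :
    ∃ w : FreeGroup (Fin k), w.toWord.length = 2 ∧ ¬ Γ.Readable w.toWord := by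
  classical
  obtain ⟨Δ, ⟨φ, e₁, e₂, hne, hl, hVs, hEs, hEe, hEfib, hcase⟩, ψ, hψV, hψE⟩ :=
    hfold
  haveI := Γ.finV; haveI := Γ.finE; haveI := Δ.finV; haveI := Δ.finE
  have hψlab : ∀ d, ψ.onE d = Δ.lab d := fun d => ψ.map_lab d
  have hΔinj : Function.Injective Δ.lab := by
    intro d d' h
    exact hψE.1 (by rw [hψlab, hψlab, h])
  have hlab : ∀ g g', Γ.lab g = Γ.lab g' →
      g = g' ∨ (g = e₁ ∧ g' = e₂) ∨ (g = e₂ ∧ g' = e₁) := by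
    intro g g' h
    apply hEfib
    apply hΔinj
    rw [φ.map_lab, φ.map_lab, h]
  have hΔVsub : ∀ x y : Δ.V, x = y := fun x y =>
    hψV.1 (Subsingleton.elim (α := Unit) _ _)
  have hDV : Nat.card Δ.V = 1 := by
    rw [Nat.card_eq_of_bijective ψ.onV hψV]
    show Nat.card Unit = 1
    simp
  have hDE : Nat.card Δ.E = k := by
    rw [Nat.card_eq_of_bijective ψ.onE hψE]
    simp [AGraph.RA, Nat.card_eq_fintype_card]
  have hGE : Nat.card Γ.E = k + 1 := by
    have hbij : Function.Bijective
        (fun g : {g : Γ.E // g ≠ e₂} => φ.onE g.1) := by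
      constructor
      · rintro ⟨g, hg⟩ ⟨g', hg'⟩ h
        rcases hEfib g g' h with h' | ⟨-, h'⟩ | ⟨h', -⟩
        · exact Subtype.ext h'
        · exact absurd h' hg'
        · exact absurd h' hg
      · intro d
        obtain ⟨g, rfl⟩ := hEs d
        by_cases hg : g = e₂
        · exact ⟨⟨e₁, hne⟩, by rw [hg, ← hEe]⟩
        · exact ⟨⟨g, hg⟩, rfl⟩
    have h1 : Nat.card {g : Γ.E // g ≠ e₂} = k :=
      (Nat.card_eq_of_bijective _ hbij).trans hDE
    have h2 : Nat.card Γ.E = Nat.card {g : Γ.E // g ≠ e₂} + 1 := by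
      rw [← Nat.card_congr (Equiv.optionSubtypeNe e₂), Finite.card_option]
    omega
  have hr := hrank
  simp only [AGraph.HasRank] at hr
  rcases hcase with ⟨hss, hVfib⟩ | ⟨hss, hVfib⟩
  · -- fold at the origin: δ = true
    have hVne : Γ.t e₁ ≠ Γ.t e₂ := by
      intro h
      have hinj : Function.Injective φ.onV := by
        intro v v' hv
        rcases hVfib v v' hv with h' | ⟨h1, h2⟩ | ⟨h1, h2⟩
        · exact h'
        · rw [h1, h2, h]
        · rw [h1, h2, h]
      have hGV : Nat.card Γ.V = 1 :=
        (Nat.card_eq_of_bijective φ.onV ⟨hinj, hVs⟩).trans hDV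
      omega
    have huor : Γ.o e₁ = Γ.t e₁ ∨ Γ.o e₁ = Γ.t e₂ := by
      rcases hVfib (Γ.o e₁) (Γ.t e₁) (hΔVsub _ _) with h | ⟨h, -⟩ | ⟨h, -⟩
      · exact Or.inl h
      · exact Or.inl h
      · exact Or.inr h
    exact AGraph.exists_unreadable' Γ hcore.2 true e₁ e₂ hlab hss hVne huor
  · -- fold at the terminus: δ = false
    have hVne : Γ.o e₁ ≠ Γ.o e₂ := by
      intro h
      have hinj : Function.Injective φ.onV := by
        intro v v' hv
        rcases hVfib v v' hv with h' | ⟨h1, h2⟩ | ⟨h1, h2⟩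
        · exact h'
        · rw [h1, h2, h]
        · rw [h1, h2, h]
      have hGV : Nat.card Γ.V = 1 :=
        (Nat.card_eq_of_bijective φ.onV ⟨hinj, hVs⟩).trans hDV
      omega
    have huor : Γ.t e₁ = Γ.o e₁ ∨ Γ.t e₁ = Γ.o e₂ := by
      rcases hVfib (Γ.t e₁) (Γ.o e₁) (hΔVsub _ _) with h | ⟨h, -⟩ | ⟨h, -⟩
      · exact Or.inl h
      · exact Or.inl h
      · exact Or.inr h
    exact AGraph.exists_unreadable' Γ hcore.2 false e₁ e₂ hlab hss hVne huor
end

section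
/- Let Γ be a finite core A-graph of rank k (where A = {a_1,…,a_k}). If Γ can be transformed by a single fold into the A-graph consisting of R_A with a spike-edge attached, then there exists a freely reduced word of length 4 in F(A) that is not the label of any reduced edge-path in Γ. -/
/-- The rose `R_A` with a spike-edge (labeled `a`) attached: one extra vertex
joined to the vertex of the rose by one extra edge. -/
def AGraph.RAspike (k : ℕ) (a : Fin k) : AGraph k where
  V := Bool
  E := Fin k ⊕ Unit
  finV := inferInstance
  finE := inferInstance
  o := Sum.elim (fun _ => false) (fun _ => false)
  t := Sum.elim (fun _ => false) (fun _ => true)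
  lab := Sum.elim id (fun _ => a)

/-!
Compose the fold with the isomorphism, so that it is a morphism `φ : Γ → R_A ∪ spike` identifying
exactly two edges `e₁, e₂`. Counting edges, `|E Γ| = k + 2`, so rank `k` forces `|V Γ| = 3` and the
fold must identify two vertices. The preimage `v` of the spike tip is a sink; as `Γ` is a core graph
it has degree at least two, so its edges are exactly `e₁, e₂`, both labelled `a`, ending at `v`,
with distinct origins `p, q`. The other `k` edges have distinct labels and start in `{p, q}`; let
`f` be the one labelled `a`.

A walk reading `x a a` is impossible once the first letter `x` can only end at `v` or at a vertex
`d` whose outgoing `a`-edges all lead to the sink `v`. If `f` is not a loop, `x = a` and `d = t f`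
work, so `a⁴` is unreadable. If `f` is a loop at `q`, the vertex `p` carries a further edge `g`
(core condition again) whose label `b ≠ a` occurs only on `g`; with `ε` the direction reading
`g` towards `p`, `x = b^ε` and `d = p` work, so `b^ε a a b^ε` is unreadable.
-/

def IdentifiesAtMost {α β : Type*} (f : α → β) (x y : α) : Prop :=
  ∀ u u', f u = f u' → u = u' ∨ (u = x ∧ u' = y) ∨ (u = y ∧ u' = x)

namespace IdentifiesAtMost

variable {α β : Type*} {f : α → β} {x y : α}

lemma eq_of_ne_of_ne (h : IdentifiesAtMost f x y) {u u' : α} (huu' : f u = f u')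
    (hu : u ≠ y) (hu' : u' ≠ y) : u = u' := by
  rcases h u u' huu' with h | ⟨-, h⟩ | ⟨h, -⟩
  exacts [h, absurd h hu', absurd h hu]

lemma eq_or_eq (h : IdentifiesAtMost f x y) {u : α} (hu : f u = f x) : u = x ∨ u = y := by
  rcases h u x hu with h | ⟨h, -⟩ | ⟨h, -⟩
  exacts [.inl h, .inl h, .inr h]

lemma injective (h : IdentifiesAtMost f x y) (hxy : x = y) : f.Injective := by
  intro u u' huu'
  rcases h u u' huu' with h | ⟨h, h'⟩ | ⟨h, h'⟩
  exacts [h, h.trans (hxy.trans h'.symm), h.trans (hxy.symm.trans h'.symm)]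

lemma card_eq_add_one [Finite α] (h : IdentifiesAtMost f x y) (hf : f.Surjective)
    (hxy : x ≠ y) (hfxy : f x = f y) : Nat.card α = Nat.card β + 1 := by
  classical
  have : Finite β := Finite.of_surjective f hf
  let g : α → Option β := fun u => if u = y then none else some (f u)
  have hg : g.Bijective := by
    refine ⟨fun u u' hu => ?_, fun z => ?_⟩
    · by_cases hu₁ : u = y <;> by_cases hu₂ : u' = y <;>
        simp only [g, hu₁, hu₂, ↓reduceIte, reduceCtorEq, Option.some.injEq] at hu
      · exact hu₁.trans hu₂.symm
      · exact h.eq_of_ne_of_ne hu hu₁ hu₂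
    · obtain _ | z := z
      · exact ⟨y, by simp [g]⟩
      obtain ⟨u, rfl⟩ := hf z
      by_cases hu : u = y
      · exact ⟨x, by simp [g, hxy, hfxy, hu]⟩
      · exact ⟨u, by simp [g, hu]⟩
  rw [Nat.card_eq_of_bijective g hg, Finite.card_option]

lemma comp {γ : Type*} {g : β → γ} (h : IdentifiesAtMost f x y) (hg : g.Injective) :
    IdentifiesAtMost (g ∘ f) x y :=
  fun u u' hu => h u u' (hg hu)

end IdentifiesAtMost

namespace AGraph

variable {k : ℕ}

def Hom.comp {Γ Δ Θ : AGraph k} (ψ : Hom Δ Θ) (φ : Hom Γ Δ) : Hom Γ Θ where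
  onV := ψ.onV ∘ φ.onV
  onE := ψ.onE ∘ φ.onE
  map_o e := by simp [ψ.map_o, φ.map_o]
  map_t e := by simp [ψ.map_t, φ.map_t]
  map_lab e := by simp [ψ.map_lab, φ.map_lab]

lemma IsFold.trans_iso {Γ Δ Θ : AGraph k} (h : IsFold Γ Δ) (hiso : Iso Δ Θ) : IsFold Γ Θ := by
  obtain ⟨φ, e₁, e₂, hne, hlab, hV, hE, heq, hfibE, hfibV⟩ := h
  obtain ⟨ψ, hψV, hψE⟩ := hiso
  refine ⟨ψ.comp φ, e₁, e₂, hne, hlab, hψV.2.comp hV, hψE.2.comp hE, congrArg ψ.onE heq,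
    IdentifiesAtMost.comp (f := φ.onE) hfibE hψE.1, ?_⟩
  exact hfibV.imp (And.imp_right fun h => IdentifiesAtMost.comp (f := φ.onV) h hψV.1)
    (And.imp_right fun h => IdentifiesAtMost.comp (f := φ.onV) h hψV.1)

variable {Γ : AGraph k}

lemma IsFold.card_E {Δ : AGraph k} (h : IsFold Γ Δ) : Nat.card Γ.E = Nat.card Δ.E + 1 := by
  obtain ⟨φ, e₁, e₂, hne, -, -, hsurjE, heq, hE, -⟩ := h
  have := Γ.finE
  exact IdentifiesAtMost.card_eq_add_one (f := φ.onE) hE hsurjE hne heq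

lemma Connected.exists_edge_at (hΓ : Γ.Connected) {u w : Γ.V} (huw : u ≠ w) :
    ∃ e, Γ.o e = u ∨ Γ.t e = u := by
  obtain ⟨_ | ⟨⟨e, b⟩, l⟩, -, hhead, -, hnil⟩ := hΓ u w
  · exact absurd (hnil rfl) huw
  · have hs := hhead (e, b) rfl
    cases b
    · exact ⟨e, .inr hs⟩
    · exact ⟨e, .inl hs⟩

lemma degree_eq_one {u : Γ.V} {e : Γ.E} (he : (Γ.o e = u ∧ Γ.t e ≠ u) ∨ (Γ.t e = u ∧ Γ.o e ≠ u))
    (h : ∀ g, (Γ.o g = u ∨ Γ.t g = u) → g = e) : Γ.degree u = 1 := by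
  have hcard : ∀ p : Γ.E → Prop, p e → (∀ g, p g → g = e) → Nat.card {g // p g} = 1 :=
    fun p hp hu => Nat.card_eq_one_iff_exists.2 ⟨⟨e, hp⟩, fun g => Subtype.ext (hu g g.2)⟩
  have hzero : ∀ p : Γ.E → Prop, ¬ p e → (∀ g, p g → g = e) → Nat.card {g // p g} = 0 :=
    fun p hp hu => by
      have : IsEmpty {g // p g} := ⟨fun g => hp (hu g g.2 ▸ g.2)⟩
      exact Nat.card_of_isEmpty
  rcases he with ⟨ho, ht⟩ | ⟨ht, ho⟩
  · rw [degree, hcard _ ho fun g hg => h g (.inl hg), hzero _ ht fun g hg => h g (.inr hg)]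
  · rw [degree, hzero _ ho fun g hg => h g (.inl hg), hcard _ ht fun g hg => h g (.inr hg)]

lemma exists_ne_edge_at_of_degree_ne_one (hdeg : ∀ u, Γ.degree u ≠ 1) {u : Γ.V} {e : Γ.E}
    (he : (Γ.o e = u ∧ Γ.t e ≠ u) ∨ (Γ.t e = u ∧ Γ.o e ≠ u)) :
    ∃ g ≠ e, Γ.o g = u ∨ Γ.t g = u := by
  by_contra! hcon
  exact hdeg u <| degree_eq_one he fun g hg =>
    by_contra fun hge => hg.elim (hcon g hge).1 (hcon g hge).2

lemma not_readable_of_aa_dead_end {a : Fin k} {v d : Γ.V} {x : Fin k × Bool}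
    (rest : List (Fin k × Bool))
    (hv : ∀ e, Γ.lab e = a → Γ.o e ≠ v) (hd : ∀ e, Γ.lab e = a → Γ.o e = d → Γ.t e = v)
    (hx : ∀ s : Γ.E × Bool, (Γ.lab s.1, s.2) = x → Γ.stepEnd s = d ∨ Γ.stepEnd s = v) :
    ¬ Γ.Readable (x :: (a, true) :: (a, true) :: rest) := by
  rintro ⟨l, hwalk, hlabel⟩
  rcases l with _ | ⟨s₁, _ | ⟨⟨f₂, b₂⟩, _ | ⟨⟨f₃, b₃⟩, l⟩⟩⟩ <;>
    simp only [walkLabel, List.map, List.cons.injEq, Prod.mk.injEq, reduceCtorEq, and_false]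
      at hlabel
  obtain ⟨h₁, ⟨h₂, rfl⟩, ⟨h₃, rfl⟩, -⟩ := hlabel
  obtain ⟨h₁₂, hwalk⟩ := List.isChain_cons_cons.1 hwalk
  obtain ⟨h₂₃, -⟩ := List.isChain_cons_cons.1 hwalk
  simp only [stepStart, stepEnd, if_true] at h₁₂ h₂₃
  rcases hx s₁ h₁ with h | h
  · exact hv f₃ h₃ (h₂₃ ▸ hd f₂ h₂ (h₁₂ ▸ h))
  · exact hv f₂ h₂ (h₁₂ ▸ h)

lemma exists_unreadable_of_aa_dead_end {a : Fin k} {v d : Γ.V} {x : Fin k × Bool}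
    (hxa : x ≠ (a, false))
    (hv : ∀ e, Γ.lab e = a → Γ.o e ≠ v) (hd : ∀ e, Γ.lab e = a → Γ.o e = d → Γ.t e = v)
    (hx : ∀ s : Γ.E × Bool, (Γ.lab s.1, s.2) = x → Γ.stepEnd s = d ∨ Γ.stepEnd s = v) :
    ∃ w : FreeGroup (Fin k), w.toWord.length = 4 ∧ ¬ Γ.Readable w.toWord := by
  have hxa' : x.1 = a → x.2 = true := fun h =>
    by_contra fun hε => hxa (Prod.ext h (Bool.not_eq_true _ ▸ hε))
  have hred : FreeGroup.IsReduced [x, (a, true), (a, true), x] :=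
    FreeGroup.isReduced_cons_cons.2 ⟨hxa', FreeGroup.isReduced_cons_cons.2 ⟨fun _ => rfl,
      FreeGroup.isReduced_cons_cons.2 ⟨fun h => (hxa' h.symm).symm, .singleton⟩⟩⟩
  refine ⟨FreeGroup.mk [x, (a, true), (a, true), x], ?_, ?_⟩ <;>
    rw [FreeGroup.toWord_mk, hred.reduce_eq]
  · rfl
  · exact not_readable_of_aa_dead_end [x] hv hd hx

section Sink

variable {a : Fin k} {v : Γ.V} {e₁ e₂ fa : Γ.E}

lemma exists_unreadable_of_sink_of_not_loop (hout : ∀ e, Γ.o e ≠ v)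
    (ha : ∀ e, Γ.lab e = a → e = e₁ ∨ e = e₂ ∨ e = fa) (ht₁ : Γ.t e₁ = v) (ht₂ : Γ.t e₂ = v)
    (hloop : Γ.o fa ≠ Γ.t fa) :
    ∃ w : FreeGroup (Fin k), w.toWord.length = 4 ∧ ¬ Γ.Readable w.toWord := by
  refine exists_unreadable_of_aa_dead_end (a := a) (x := (a, true)) (d := Γ.t fa) (by simp)
    (fun e _ => hout e) ?_ ?_
  · intro e he hoe
    rcases ha e he with rfl | rfl | rfl
    exacts [ht₁, ht₂, absurd hoe hloop]
  · rintro ⟨e, b⟩ h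
    obtain ⟨he, rfl⟩ := Prod.ext_iff.1 h
    simp only [stepEnd, if_true]
    rcases ha e he with rfl | rfl | rfl
    exacts [.inr ht₁, .inr ht₂, .inl rfl]

lemma exists_unreadable_of_sink_of_loop (hdeg : ∀ u, Γ.degree u ≠ 1) (hout : ∀ e, Γ.o e ≠ v)
    (ht₁ : Γ.t e₁ = v) (ht₂ : Γ.t e₂ = v) (hlab₁ : Γ.lab e₁ = a) (hlab₂ : Γ.lab e₂ = a)
    (ho : Γ.o e₁ ≠ Γ.o e₂)
    (hinj : ∀ f f', f ≠ e₁ → f ≠ e₂ → f' ≠ e₁ → f' ≠ e₂ → Γ.lab f = Γ.lab f' → f = f')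
    (ha : ∀ e, Γ.lab e = a → e = e₁ ∨ e = e₂ ∨ e = fa)
    (hloop : Γ.o fa = Γ.o e₂ ∧ Γ.t fa = Γ.o e₂) :
    ∃ w : FreeGroup (Fin k), w.toWord.length = 4 ∧ ¬ Γ.Readable w.toWord := by
  obtain ⟨g, hg₁, hgd⟩ :=
    exists_ne_edge_at_of_degree_ne_one hdeg (.inl ⟨rfl, ht₁ ▸ (hout e₁).symm⟩)
  have hg₂ : g ≠ e₂ := by
    rintro rfl
    exact hgd.elim (fun h => ho h.symm) (fun h => hout e₁ (h.symm.trans ht₂))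
  have hga : Γ.lab g ≠ a := by
    intro h
    rcases ha g h with rfl | rfl | rfl
    exacts [hg₁ rfl, hg₂ rfl, hgd.elim (fun h => ho (h.symm.trans hloop.1))
      (fun h => ho (h.symm.trans hloop.2))]
  obtain ⟨ε, hε⟩ : ∃ ε, Γ.stepEnd (g, ε) = Γ.o e₁ :=
    hgd.elim (fun h => ⟨false, by simp [stepEnd, h]⟩) (fun h => ⟨true, by simp [stepEnd, h]⟩)
  refine exists_unreadable_of_aa_dead_end (a := a) (x := (Γ.lab g, ε)) (d := Γ.o e₁) (by simp [hga])
    (fun e _ => hout e) ?_ ?_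
  · intro e he hoe
    rcases ha e he with rfl | rfl | rfl
    exacts [ht₁, ht₂, absurd (hloop.1.symm.trans hoe) ho.symm]
  · rintro ⟨e, b⟩ h
    obtain ⟨he, rfl⟩ := Prod.ext_iff.1 h
    change Γ.lab e = Γ.lab g at he
    have hea : Γ.lab e ≠ a := he ▸ hga
    obtain rfl := hinj e g (fun h => hea (h ▸ hlab₁)) (fun h => hea (h ▸ hlab₂)) hg₁ hg₂ he
    exact .inl hε

lemma exists_unreadable_of_sink (hdeg : ∀ u, Γ.degree u ≠ 1) (hout : ∀ e, Γ.o e ≠ v)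
    (ht₁ : Γ.t e₁ = v) (ht₂ : Γ.t e₂ = v) (hlab₁ : Γ.lab e₁ = a) (hlab₂ : Γ.lab e₂ = a)
    (ho : Γ.o e₁ ≠ Γ.o e₂) (horig : ∀ e, Γ.o e = Γ.o e₁ ∨ Γ.o e = Γ.o e₂)
    (hinj : ∀ f f', f ≠ e₁ → f ≠ e₂ → f' ≠ e₁ → f' ≠ e₂ → Γ.lab f = Γ.lab f' → f = f')
    (hfa₁ : fa ≠ e₁) (hfa₂ : fa ≠ e₂) (hfa : Γ.lab fa = a) :
    ∃ w : FreeGroup (Fin k), w.toWord.length = 4 ∧ ¬ Γ.Readable w.toWord := by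
  have ha : ∀ e, Γ.lab e = a → e = e₁ ∨ e = e₂ ∨ e = fa := by
    intro e he
    by_cases h₁ : e = e₁
    · exact .inl h₁
    by_cases h₂ : e = e₂
    · exact .inr (.inl h₂)
    exact .inr (.inr (hinj e fa h₁ h₂ hfa₁ hfa₂ (he.trans hfa.symm)))
  by_cases hloop : Γ.o fa = Γ.t fa
  · rcases horig fa with h | h
    · exact exists_unreadable_of_sink_of_loop hdeg hout ht₂ ht₁ hlab₂ hlab₁ ho.symm
        (fun f f' h₁ h₂ h₁' h₂' => hinj f f' h₂ h₁ h₂' h₁') (fun e he => or_left_comm.1 (ha e he))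
        ⟨h, hloop ▸ h⟩
    · exact exists_unreadable_of_sink_of_loop hdeg hout ht₁ ht₂ hlab₁ hlab₂ ho hinj ha
        ⟨h, hloop ▸ h⟩
  · exact exists_unreadable_of_sink_of_not_loop hout ha ht₁ ht₂ hloop

end Sink

section Spike

variable {a : Fin k} (φ : Hom Γ (RAspike k a))

lemma Hom.onV_o_RAspike (e : Γ.E) : φ.onV (Γ.o e) = false := by
  rw [← φ.map_o]
  cases φ.onE e <;> rfl

lemma Hom.onV_t_RAspike_eq_true_iff (e : Γ.E) : φ.onV (Γ.t e) = true ↔ φ.onE e = .inr () := by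
  rw [← φ.map_t]
  cases φ.onE e <;> simp [RAspike]

lemma Hom.onE_RAspike_eq_inl (e : Γ.E) (he : φ.onE e ≠ .inr ()) :
    φ.onE e = .inl (Γ.lab e) := by
  rw [← φ.map_lab]
  revert he
  cases φ.onE e <;> simp [RAspike]

lemma Hom.o_ne_of_RAspike {v : Γ.V} (hv : φ.onV v = true) (e : Γ.E) : Γ.o e ≠ v :=
  fun h => by simpa [h, hv] using φ.onV_o_RAspike e

lemma Hom.t_eq_of_RAspike (hΓ : Γ.IsCore) {e₁ e₂ : Γ.E} (hE : IdentifiesAtMost φ.onE e₁ e₂)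
    {v w : Γ.V} (hv : φ.onV v = true) (hw : w ≠ v) : Γ.t e₁ = v ∧ Γ.t e₂ = v := by
  have hout := φ.o_ne_of_RAspike hv
  -- `v` has degree at least two and every edge at `v` ends there and maps to the spike, so the
  -- edges at `v` are exactly the folded pair.
  obtain ⟨e, he⟩ := hΓ.1.exists_edge_at hw.symm
  have hte : Γ.t e = v := he.resolve_left (hout e)
  obtain ⟨g, hge, hg⟩ := exists_ne_edge_at_of_degree_ne_one hΓ.2 (.inr ⟨hte, hout e⟩)
  have htg : Γ.t g = v := hg.resolve_left (hout g)
  have hspike : ∀ f, Γ.t f = v → φ.onE f = .inr () := fun f hf =>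
    (φ.onV_t_RAspike_eq_true_iff f).1 (hf ▸ hv)
  rcases hE e g ((hspike e hte).trans (hspike g htg).symm) with h | ⟨rfl, rfl⟩ | ⟨rfl, rfl⟩
  exacts [absurd h.symm hge, ⟨hte, htg⟩, ⟨htg, hte⟩]

end Spike

lemma exists_unreadable_of_isFold_RAspike {a : Fin k} (hΓ : Γ.IsCore)
    (hfold : IsFold Γ (RAspike k a)) (hV : 2 < Nat.card Γ.V) :
    ∃ w : FreeGroup (Fin k), w.toWord.length = 4 ∧ ¬ Γ.Readable w.toWord := by
  obtain ⟨φ, e₁, e₂, -, -, hsurjV, hsurjE, heq, hE, hfibV⟩ := hfold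
  replace hE : IdentifiesAtMost φ.onE e₁ e₂ := hE
  have := Γ.finV
  have := (RAspike k a).finV
  have hninj : ¬ φ.onV.Injective := fun h => by
    have := Nat.card_le_card_of_injective _ h
    simp [RAspike] at this
    omega
  obtain ⟨v, hv⟩ := hsurjV true
  have hout := φ.o_ne_of_RAspike hv
  have : Nontrivial Γ.V := Finite.one_lt_card_iff_nontrivial.1 (by omega)
  obtain ⟨w, hw⟩ := exists_ne v
  obtain ⟨ht₁, ht₂⟩ := φ.t_eq_of_RAspike hΓ hE hv hw
  -- a fold at the common origin would identify no vertices, both terminal ends being `v`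
  have hV' : IdentifiesAtMost φ.onV (Γ.o e₁) (Γ.o e₂) :=
    (hfibV.resolve_left fun h => hninj (IdentifiesAtMost.injective (f := φ.onV) h.2
      (ht₁.trans ht₂.symm))).2
  have ho : Γ.o e₁ ≠ Γ.o e₂ := fun h => hninj (hV'.injective h)
  have horig : ∀ e, Γ.o e = Γ.o e₁ ∨ Γ.o e = Γ.o e₂ := fun e =>
    hV'.eq_or_eq ((φ.onV_o_RAspike e).trans (φ.onV_o_RAspike e₁).symm)
  have hφe₁ : φ.onE e₁ = .inr () := (φ.onV_t_RAspike_eq_true_iff e₁).1 (ht₁ ▸ hv)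
  have hother : ∀ f, f ≠ e₁ → f ≠ e₂ → φ.onE f = .inl (Γ.lab f) := fun f h₁ h₂ =>
    φ.onE_RAspike_eq_inl f fun h => (hE.eq_or_eq (h.trans hφe₁.symm)).elim h₁ h₂
  have hinj : ∀ f f', f ≠ e₁ → f ≠ e₂ → f' ≠ e₁ → f' ≠ e₂ → Γ.lab f = Γ.lab f' → f = f' :=
    fun f f' h₁ h₂ h₁' h₂' hl =>
      hE.eq_of_ne_of_ne (by rw [hother f h₁ h₂, hother f' h₁' h₂', hl]) h₂ h₂'
  have hlab : ∀ e, Γ.lab e = (RAspike k a).lab (φ.onE e) := fun e => (φ.map_lab e).symm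
  obtain ⟨fa, hfa⟩ := hsurjE (.inl a)
  refine exists_unreadable_of_sink hΓ.2 hout ht₁ ht₂ (by rw [hlab, hφe₁])
    (by rw [hlab, ← heq, hφe₁]) ho horig hinj (fa := fa) ?_ ?_ (by rw [hlab, hfa]; rfl)
  · rintro rfl
    simp [hφe₁] at hfa
  · rintro rfl
    simp [← heq, hφe₁] at hfa

end AGraph

theorem statement15 (k : ℕ) (Γ : AGraph k) (hcore : Γ.IsCore)
    (hrank : Γ.HasRank k)
    (hfold : ∃ Δ : AGraph k, AGraph.IsFold Γ Δ ∧
      ∃ a : Fin k, AGraph.Iso Δ (AGraph.RAspike k a)) :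
    ∃ w : FreeGroup (Fin k), w.toWord.length = 4 ∧ ¬ Γ.Readable w.toWord := by
  obtain ⟨Δ, hΓΔ, a, hΔ⟩ := hfold
  have hfold := hΓΔ.trans_iso hΔ
  refine AGraph.exists_unreadable_of_isFold_RAspike hcore hfold ?_
  have hE : Nat.card Γ.E = k + 2 := by simp [hfold.card_E, AGraph.RAspike]
  unfold AGraph.HasRank at hrank
  omega
end
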